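/- arXiv:1305.3587 — 2 statements merged into one kernel-verified Lean document; each statement's English description precedes it below -/
import Mathlib

section
/- A unit-area non-convex pentagon with two interior angles larger than π has perimeter greater than that of the unit-area equilateral triangle, 3·(4/√3)^{1/2} ≈ 4.559. -/
open Finset

noncomputable section

abbrev Pt : Type := EuclideanSpace ℝ (Fin 2)

def cross2 (p q : Pt) : ℝ := p 0 * q 1 - p 1 * q 0

def perimeter {n : ℕ} [NeZero n] (v : Fin n → Pt) : ℝ :=
  ∑ i, dist (v i) (v (i + 1))

def shoelace {n : ℕ} [NeZero n] (v : Fin n → Pt) : ℝ :=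
  (∑ i, (v i 0 * v (i + 1) 1 - v (i + 1) 0 * v i 1)) / 2

def polyArea {n : ℕ} [NeZero n] (v : Fin n → Pt) : ℝ := |shoelace v|

def IsSimplePolygon {n : ℕ} [NeZero n] (v : Fin n → Pt) : Prop :=
  Function.Injective v ∧
  (∀ i : Fin n,
    segment ℝ (v i) (v (i + 1)) ∩ segment ℝ (v (i + 1)) (v (i + 1 + 1)) = {v (i + 1)}) ∧
  (∀ i j : Fin n, j ≠ i → j ≠ i + 1 → j + 1 ≠ i →
    segment ℝ (v i) (v (i + 1)) ∩ segment ℝ (v j) (v (j + 1)) = ∅)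

/-- A simple, positively (counterclockwise) oriented polygon. -/
def IsPolygon {n : ℕ} [NeZero n] (v : Fin n → Pt) : Prop :=
  IsSimplePolygon v ∧ 0 < shoelace v

/-- Interior angle at vertex `i` of a positively oriented simple polygon:
the unoriented angle at a convex (left-turn) vertex, and its reflex complement
at a right-turn vertex. -/
def interiorAngle {n : ℕ} [NeZero n] (v : Fin n → Pt) (i : Fin n) : ℝ :=
  if 0 ≤ cross2 (v i - v (i - 1)) (v (i + 1) - v i) then
    EuclideanGeometry.angle (v (i - 1)) (v i) (v (i + 1))
  else 2 * Real.pi - EuclideanGeometry.angle (v (i - 1)) (v i) (v (i + 1))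

def IsConvexPolygon {n : ℕ} [NeZero n] (v : Fin n → Pt) : Prop :=
  IsPolygon v ∧ ∀ i, interiorAngle v i ≤ Real.pi

/-- The polygon is circumscribed about a circle: every edge is tangent to a
common circle of radius `r` centered at `c`. -/
def IsCircumscribed {n : ℕ} [NeZero n] (v : Fin n → Pt) : Prop :=
  ∃ c : Pt, ∃ r : ℝ, 0 < r ∧
    ∀ i : Fin n, Metric.infDist c (segment ℝ (v i) (v (i + 1))) = r

/-- The polygon is inscribed in a circle: all vertices lie on a common circle. -/
def IsInscribed {n : ℕ} [NeZero n] (v : Fin n → Pt) : Prop :=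
  ∃ c : Pt, ∃ r : ℝ, ∀ i : Fin n, dist c (v i) = r

def longestEdge {n : ℕ} [NeZero n] (v : Fin n → Pt) : ℝ :=
  Finset.univ.sup' Finset.univ_nonempty (fun i => dist (v i) (v (i + 1)))

/-! Rotate the (counterclockwise) pentagon so that one reflex vertex is `v 1`; the other one is
`v 2` or `v 3`. If it is `v 3`, removing the ears `v 0 v 1 v 2` and `v 2 v 3 v 4`, which have
negative signed area, leaves the triangle `v 0 v 2 v 4` with area greater than 1 and
perimeter at most that of the pentagon. If it is `v 2`, the edges `v 0 v 1` and `v 2 v 3` do not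
cross, which forces the quadrilateral `v 0 v 1 v 2 v 3` to have negative signed area, and the
triangle `v 0 v 3 v 4` plays the same role. For triangles, Heron's formula and AM-GM give
`432 · area² ≤ perimeter⁴`, and `432` is the fourth power of the perimeter of the unit-area
equilateral triangle. -/

open Real

def signedArea (a b c : Pt) : ℝ := cross2 (b - a) (c - a) / 2

lemma cross2_sub_sub_eq_two_mul_signedArea (a b c : Pt) :
    cross2 (b - a) (c - b) = 2 * signedArea a b c := by
  simp only [cross2, signedArea, PiLp.sub_apply]
  ring

lemma dist_sq_eq_sq_add_sq (x y : Pt) : dist x y ^ 2 = (x 0 - y 0) ^ 2 + (x 1 - y 1) ^ 2 := by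
  rw [EuclideanSpace.dist_eq, sq_sqrt (by positivity)]
  simp [Fin.sum_univ_two, Real.dist_eq, sq_abs]

lemma heron_signedArea (a b c : Pt) :
    16 * signedArea a b c ^ 2 =
      (dist a b + dist b c + dist c a) * (dist b c + dist c a - dist a b) *
        (dist a b - dist b c + dist c a) * (dist a b + dist b c - dist c a) := by
  have expand : ∀ p q r : ℝ, (p + q + r) * (q + r - p) * (p - q + r) * (p + q - r) =
      2 * p ^ 2 * q ^ 2 + 2 * q ^ 2 * r ^ 2 + 2 * r ^ 2 * p ^ 2
        - (p ^ 2) ^ 2 - (q ^ 2) ^ 2 - (r ^ 2) ^ 2 := fun p q r => by ring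
  rw [expand, dist_sq_eq_sq_add_sq, dist_sq_eq_sq_add_sq, dist_sq_eq_sq_add_sq]
  simp only [signedArea, cross2, PiLp.sub_apply]
  ring

lemma twentySeven_mul_le_add_pow_three {x y z : ℝ} (hx : 0 ≤ x) (hy : 0 ≤ y) (hz : 0 ≤ z) :
    27 * (x * y * z) ≤ (x + y + z) ^ 3 := by
  have hs : 0 ≤ x + y + z := by positivity
  nlinarith [mul_nonneg hx (sq_nonneg (y - z)), mul_nonneg hy (sq_nonneg (z - x)),
    mul_nonneg hz (sq_nonneg (x - y)), mul_nonneg hs (sq_nonneg (x - y)),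
    mul_nonneg hs (sq_nonneg (y - z)), mul_nonneg hs (sq_nonneg (z - x))]

lemma triangle_isoperimetric (a b c : Pt) :
    432 * signedArea a b c ^ 2 ≤ (dist a b + dist b c + dist c a) ^ 4 := by
  set p := dist a b
  set q := dist b c
  set r := dist c a
  have hp : p ≤ q + r := by simpa [p, q, r, dist_comm, add_comm] using dist_triangle a c b
  have hq : q ≤ p + r := by simpa [p, q, r, dist_comm, add_comm] using dist_triangle b a c
  have hr : r ≤ p + q := by simpa [p, q, r, dist_comm, add_comm] using dist_triangle c b a
  have amgm := twentySeven_mul_le_add_pow_three (x := q + r - p) (y := p - q + r) (z := p + q - r)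
    (by linarith) (by linarith) (by linarith)
  calc 432 * signedArea a b c ^ 2
      = (p + q + r) * (27 * ((q + r - p) * (p - q + r) * (p + q - r))) := by
        linear_combination 27 * heron_signedArea a b c
    _ ≤ (p + q + r) * (p + q + r) ^ 3 := by
        gcongr
        exact amgm.trans_eq (by ring)
    _ = (p + q + r) ^ 4 := by ring

lemma unitEquilateral_perimeter_pow_four : (3 * √(4 / √3)) ^ 4 = 432 := by
  have h3 : √3 ^ 2 = 3 := sq_sqrt (by norm_num)
  rw [mul_pow, show 4 = 2 * 2 by rfl, pow_mul (√_), sq_sqrt (by positivity), div_pow, h3]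
  norm_num

lemma unitEquilateral_perimeter_lt_of_one_lt_signedArea (a b c : Pt)
    (h : 1 < signedArea a b c) :
    3 * √(4 / √3) < dist a b + dist b c + dist c a := by
  refine lt_of_pow_lt_pow_left₀ 4 (by positivity) ?_
  rw [unitEquilateral_perimeter_pow_four]
  nlinarith [triangle_isoperimetric a b c]

lemma signedArea_sub_add_sub_eq_zero (a b c d : Pt) :
    signedArea b c d - signedArea a c d + signedArea a b d - signedArea a b c = 0 := by
  simp only [signedArea, cross2, PiLp.sub_apply]
  ring

lemma signedArea_smul_sub_eq (a b c d : Pt) :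
    signedArea a c d • b - signedArea b c d • a =
      signedArea a b d • c - signedArea a b c • d := by
  ext k
  fin_cases k <;> simp [signedArea, cross2] <;> ring

lemma segment_inter_nonempty_of_signedArea {a b c d : Pt} (habc : signedArea a b c < 0)
    (habd : 0 < signedArea a b d) (hacd : 0 < signedArea a c d) (hbcd : signedArea b c d < 0) :
    (segment ℝ a b ∩ segment ℝ c d).Nonempty := by
  have hcocycle := signedArea_sub_add_sub_eq_zero a b c d
  set A := signedArea a c d
  set B := signedArea b c d
  set C := signedArea a b c
  set D := signedArea a b d
  have hAB : 0 < A - B := by linarith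
  -- `signedArea_smul_sub_eq` exhibits `(A • b - B • a) / (A - B)` as a point of both segments.
  refine ⟨(A - B)⁻¹ • (A • b - B • a),
    ⟨-B / (A - B), A / (A - B), div_nonneg (by linarith) hAB.le, by positivity,
      by field_simp; ring, by module⟩,
    ⟨D / (A - B), -C / (A - B), by positivity, div_nonneg (by linarith) hAB.le,
      by field_simp; linarith, ?_⟩⟩
  rw [signedArea_smul_sub_eq]
  module

lemma signedArea_add_signedArea_neg {a b c d : Pt} (habc : signedArea a b c < 0)
    (hbcd : signedArea b c d < 0) (hdisj : segment ℝ a b ∩ segment ℝ c d = ∅) :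
    signedArea a b c + signedArea a c d < 0 := by
  by_contra! h
  have hacd : 0 < signedArea a c d := by linarith
  have habd : 0 < signedArea a b d := by linarith [signedArea_sub_add_sub_eq_zero a b c d]
  simpa [hdisj] using segment_inter_nonempty_of_signedArea habc habd hacd hbcd

section Rotation

variable {n : ℕ} [NeZero n] (v : Fin n → Pt) (c : Fin n)

lemma shoelace_comp_add_right : shoelace (fun k => v (k + c)) = shoelace v := by
  unfold shoelace
  congr 1
  exact Fintype.sum_equiv (Equiv.addRight c) _ _ fun i => by simp [add_right_comm _ c]

lemma perimeter_comp_add_right : perimeter (fun k => v (k + c)) = perimeter v :=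
  Fintype.sum_equiv (Equiv.addRight c) _ _ fun i => by simp [add_right_comm _ c]

lemma interiorAngle_comp_add_right (i : Fin n) :
    interiorAngle (fun k => v (k + c)) i = interiorAngle v (i + c) := by
  simp only [interiorAngle, sub_add_eq_add_sub, add_right_comm _ c]

variable {v}

lemma IsSimplePolygon.comp_add_right (h : IsSimplePolygon v) :
    IsSimplePolygon (fun k => v (k + c)) := by
  obtain ⟨hinj, hadj, hdisj⟩ := h
  refine ⟨hinj.comp (add_left_injective c), fun i => ?_, fun i j hji hji' hij => ?_⟩
  · simpa only [add_right_comm _ c] using hadj (i + c)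
  · simpa only [add_right_comm _ c] using hdisj (i + c) (j + c) (by simpa using hji)
      (by simpa [add_right_comm _ c] using hji') (by simpa [add_right_comm _ c] using hij)

lemma IsPolygon.comp_add_right (h : IsPolygon v) : IsPolygon (fun k => v (k + c)) :=
  ⟨h.1.comp_add_right c, (shoelace_comp_add_right v c).symm ▸ h.2⟩

end Rotation

lemma signedArea_neg_of_pi_lt_interiorAngle {n : ℕ} [NeZero n] {v : Fin n → Pt} {i : Fin n}
    (h : π < interiorAngle v i) : signedArea (v (i - 1)) (v i) (v (i + 1)) < 0 := by
  have hcross : cross2 (v i - v (i - 1)) (v (i + 1) - v i) < 0 := by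
    by_contra! hnonneg
    rw [interiorAngle, if_pos hnonneg] at h
    exact h.not_ge (EuclideanGeometry.angle_le_pi _ _ _)
  rw [cross2_sub_sub_eq_two_mul_signedArea] at hcross
  linarith

lemma shoelace_fin_five (v : Fin 5 → Pt) :
    shoelace v = signedArea (v 0) (v 1) (v 2) + signedArea (v 0) (v 2) (v 3) +
      signedArea (v 0) (v 3) (v 4) := by
  simp only [shoelace, Fin.sum_univ_five, Fin.isValue, zero_add, Fin.reduceAdd, signedArea, cross2,
    PiLp.sub_apply]
  ring

lemma perimeter_fin_five (v : Fin 5 → Pt) :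
    perimeter v = dist (v 0) (v 1) + dist (v 1) (v 2) + dist (v 2) (v 3) + dist (v 3) (v 4) +
      dist (v 4) (v 0) := by
  simp [perimeter, Fin.sum_univ_five]

lemma unitEquilateral_perimeter_lt_of_pi_lt_interiorAngle_one_three {v : Fin 5 → Pt}
    (harea : shoelace v = 1) (h1 : π < interiorAngle v 1) (h3 : π < interiorAngle v 3) :
    3 * √(4 / √3) < perimeter v := by
  have hb := signedArea_neg_of_pi_lt_interiorAngle h1
  have hd := signedArea_neg_of_pi_lt_interiorAngle h3
  simp only [Fin.isValue, sub_self, Fin.reduceSub, Fin.reduceAdd] at hb hd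
  have hsplit : shoelace v = signedArea (v 0) (v 1) (v 2) + signedArea (v 2) (v 3) (v 4) +
      signedArea (v 0) (v 2) (v 4) := by
    rw [shoelace_fin_five]
    linarith [signedArea_sub_add_sub_eq_zero (v 0) (v 2) (v 3) (v 4)]
  have hace : 1 < signedArea (v 0) (v 2) (v 4) := by linarith
  rw [perimeter_fin_five]
  linarith [unitEquilateral_perimeter_lt_of_one_lt_signedArea _ _ _ hace,
    dist_triangle (v 0) (v 1) (v 2), dist_triangle (v 2) (v 3) (v 4)]

lemma unitEquilateral_perimeter_lt_of_pi_lt_interiorAngle_one_two {v : Fin 5 → Pt}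
    (hsimple : IsSimplePolygon v) (harea : shoelace v = 1) (h1 : π < interiorAngle v 1)
    (h2 : π < interiorAngle v 2) :
    3 * √(4 / √3) < perimeter v := by
  have hb := signedArea_neg_of_pi_lt_interiorAngle h1
  have hc := signedArea_neg_of_pi_lt_interiorAngle h2
  have hdisj := hsimple.2.2 0 2 (by decide) (by decide) (by decide)
  simp only [Fin.isValue, sub_self, Fin.reduceSub, Fin.reduceAdd, zero_add] at hb hc hdisj
  have habcd := signedArea_add_signedArea_neg hb hc hdisj
  rw [shoelace_fin_five] at harea
  have hade : 1 < signedArea (v 0) (v 3) (v 4) := by linarith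
  rw [perimeter_fin_five]
  linarith [unitEquilateral_perimeter_lt_of_one_lt_signedArea _ _ _ hade,
    dist_triangle (v 0) (v 1) (v 2), dist_triangle (v 0) (v 2) (v 3)]

theorem stmt3 (v : Fin 5 → Pt) (hP : IsPolygon v) (harea : polyArea v = 1)
    (i j : Fin 5) (hij : i ≠ j)
    (hi : Real.pi < interiorAngle v i) (hj : Real.pi < interiorAngle v j) :
    3 * Real.sqrt (4 / Real.sqrt 3) < perimeter v := by
  wlog hji : j - i = 1 ∨ j - i = 2 generalizing i j
  · exact this j i hij.symm hj hi
      ((by decide : ∀ a b : Fin 5, a ≠ b → ¬(b - a = 1 ∨ b - a = 2) →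
        a - b = 1 ∨ a - b = 2) i j hij hji)
  wlog hi1 : i = 1 generalizing v i j
  · rw [← perimeter_comp_add_right v (i - 1)]
    refine this _ (hP.comp_add_right _) (by rwa [polyArea, shoelace_comp_add_right]) 1 (j - (i - 1))
      ?_ ?_ ?_ ?_ rfl
    · rwa [ne_comm, ne_eq, sub_eq_iff_eq_add, add_sub_cancel, eq_comm]
    · rwa [interiorAngle_comp_add_right, add_sub_cancel]
    · rwa [interiorAngle_comp_add_right, sub_add_cancel]
    · rwa [sub_sub, sub_add_cancel]
  subst hi1
  have hshoelace : shoelace v = 1 := by rwa [polyArea, abs_of_pos hP.2] at harea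
  obtain rfl | rfl : j = 2 ∨ j = 3 :=
    (by decide : ∀ j : Fin 5, j - 1 = 1 ∨ j - 1 = 2 → j = 2 ∨ j = 3) j hji
  · exact unitEquilateral_perimeter_lt_of_pi_lt_interiorAngle_one_two hP.1 hshoelace hi hj
  · exact unitEquilateral_perimeter_lt_of_pi_lt_interiorAngle_one_three hshoelace hi hj

end
end

section
/- Among unit-area equilateral convex pentagons with two adjacent angles summing to π, the minimum perimeter is 5/√(1+√3/4) ≈ 4.177, attained when the two supplementary angles both equal π/2. -/
open Finset

noncomputable section

def IsEquilateralPentagon (v : Fin 5 → Pt) : Prop :=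
  ∀ i j : Fin 5, dist (v i) (v (i + 1)) = dist (v j) (v (j + 1))


/-!
Let the supplementary angles be those at `B` and `C` of the pentagon `ABCDE` with side `x`.
Since `∠B + ∠C = π` and both turns are to the left, `BA` and `CD` are equal parallel vectors, so
`ABCD` is a parallelogram and `ADE` is an equilateral triangle of side `x`. The parallelogram has
area `x² sin B ≤ x²` and the triangle `(√3/4) x²`, so unit area forces `x² (1 + √3/4) ≥ 1`, i.e.
perimeter `5x ≥ 5/√(1 + √3/4)`. Equality holds for the square with an equilateral roof.
-/

open EuclideanGeometry

lemma cross2_self (p : Pt) : cross2 p p = 0 := by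
  simp only [cross2]; ring

lemma cross2_zero_right (p : Pt) : cross2 p 0 = 0 := by
  simp only [cross2, PiLp.zero_apply]; ring

lemma cross2_sub_right (p q r : Pt) : cross2 p (q - r) = cross2 p q - cross2 p r := by
  simp only [cross2, PiLp.sub_apply]; ring

lemma cross2_sq_add_inner_sq (p q : Pt) :
    cross2 p q ^ 2 + inner ℝ p q ^ 2 = ‖p‖ ^ 2 * ‖q‖ ^ 2 := by
  simp only [cross2, EuclideanSpace.real_norm_sq_eq, PiLp.inner_apply, Fin.sum_univ_two,
    RCLike.inner_apply, conj_trivial]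
  ring

lemma cross2_le_norm_mul_norm (p q : Pt) : cross2 p q ≤ ‖p‖ * ‖q‖ := by
  refine le_of_sq_le_sq ?_ (by positivity)
  nlinarith [cross2_sq_add_inner_sq p q, sq_nonneg (inner ℝ p q)]

lemma cross2_le_of_norm_eq {p q : Pt} {x : ℝ} (hp : ‖p‖ = x) (hq : ‖q‖ = x) (hpq : ‖p - q‖ = x) :
    cross2 p q ≤ √3 / 2 * x ^ 2 := by
  have hinner : inner ℝ p q = x ^ 2 / 2 := by
    have := norm_sub_sq_real p q
    rw [hp, hq, hpq] at this
    linarith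
  have hsq := cross2_sq_add_inner_sq p q
  rw [hinner, hp, hq] at hsq
  refine le_of_sq_le_sq ?_ (by positivity)
  rw [mul_pow, div_pow, Real.sq_sqrt (by norm_num : (0 : ℝ) ≤ 3)]
  linarith

lemma eq_of_inner_eq_of_cross2_nonneg {m u w : Pt} (hm : m ≠ 0) (hnorm : ‖u‖ = ‖w‖)
    (hinner : inner ℝ m u = inner ℝ m w) (hu : 0 ≤ cross2 m u) (hw : 0 ≤ cross2 m w) :
    u = w := by
  have hcross : cross2 m u = cross2 m w := by
    have hu' := cross2_sq_add_inner_sq m u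
    have hw' := cross2_sq_add_inner_sq m w
    rw [hinner, hnorm] at hu'
    exact (sq_eq_sq₀ hu hw).1 (by linarith)
  have hd := cross2_sq_add_inner_sq m (u - w)
  rw [cross2_sub_right, inner_sub_right, hcross, hinner, sub_self, sub_self] at hd
  have hm' : ‖m‖ ^ 2 ≠ 0 := by positivity
  have := (mul_eq_zero.1 (by linarith : ‖m‖ ^ 2 * ‖u - w‖ ^ 2 = 0)).resolve_left hm'
  exact sub_eq_zero.1 (norm_eq_zero.1 (pow_eq_zero_iff two_ne_zero |>.1 this))

lemma cross2_eq_zero_of_angle_eq_pi {a b c : Pt} (h : ∠ a b c = Real.pi) :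
    cross2 (b - a) (c - b) = 0 := by
  obtain ⟨-, r, -, hr⟩ := InnerProductGeometry.angle_eq_pi_iff.1 h
  rw [vsub_eq_sub, vsub_eq_sub] at hr
  rw [hr, ← neg_sub a b]
  simp only [cross2, PiLp.neg_apply, PiLp.smul_apply, smul_eq_mul]; ring

lemma Fin.add_one_ne_self_of_one_lt {n : ℕ} [NeZero n] (hn : 1 < n) (i : Fin n) : i + 1 ≠ i := by
  obtain ⟨m, rfl⟩ : ∃ m, n = m + 2 := ⟨n - 2, by omega⟩
  simp

lemma Fin.add_one_add_one_ne_self {n : ℕ} [NeZero n] (hn : 2 < n) (i : Fin n) : i + 1 + 1 ≠ i := by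
  obtain ⟨m, rfl⟩ : ∃ m, n = m + 3 := ⟨n - 3, by omega⟩
  rw [add_assoc, Ne, add_eq_left, Fin.ext_iff, Fin.val_add]
  simp [Nat.mod_eq_of_lt (by omega : 2 < m + 3)]

section Polygon

variable {n : ℕ} [NeZero n] {v : Fin n → Pt}

lemma interiorAngle_eq_angle {i : Fin n} (h : 0 ≤ cross2 (v i - v (i - 1)) (v (i + 1) - v i)) :
    interiorAngle v i = ∠ (v (i - 1)) (v i) (v (i + 1)) :=
  if_pos h

lemma IsConvexPolygon.cross2_nonneg (hv : IsConvexPolygon v) (i : Fin n) :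
    0 ≤ cross2 (v i - v (i - 1)) (v (i + 1) - v i) := by
  by_contra! h
  have hle := hv.2 i
  rw [interiorAngle, if_neg h.not_ge] at hle
  have := cross2_eq_zero_of_angle_eq_pi (le_antisymm (angle_le_pi _ _ _) (by linarith))
  linarith

end Polygon

lemma sub_eq_sub_of_angle_add_angle_eq_pi {A B C D : Pt} (hAB : dist A B = dist B C)
    (hCD : dist C D = dist B C) (hBC : B ≠ C) (hB : 0 ≤ cross2 (B - A) (C - B))
    (hC : 0 ≤ cross2 (C - B) (D - C)) (h : ∠ A B C + ∠ B C D = Real.pi) : A - B = D - C := by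
  simp only [dist_eq_norm] at hAB hCD
  have hx : ‖B - C‖ ≠ 0 := norm_ne_zero_iff.2 (sub_ne_zero.2 hBC)
  have hcos : Real.cos (∠ B C D) = -Real.cos (∠ A B C) := by
    rw [← Real.cos_pi_sub, ← h, add_sub_cancel_left]
  simp only [EuclideanGeometry.angle, InnerProductGeometry.cos_angle, vsub_eq_sub] at hcos
  rw [hAB, norm_sub_rev C B, norm_sub_rev D C, hCD] at hcos
  field_simp at hcos
  refine eq_of_inner_eq_of_cross2_nonneg (m := C - B) (sub_ne_zero.2 hBC.symm) ?_ ?_ ?_ hC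
  · rw [hAB, ← hCD, norm_sub_rev]
  · have hneg : inner ℝ (C - B) (D - C) = -inner ℝ (B - C) (D - C) := by
      rw [← inner_neg_left, neg_sub]
    rw [hneg, hcos, neg_neg, real_inner_comm]
  · have : cross2 (C - B) (A - B) = cross2 (B - A) (C - B) := by
      simp only [cross2, PiLp.sub_apply]; ring
    rwa [this]

lemma cross2_sum_le_of_sub_eq_sub {A B C D E : Pt} {x : ℝ} (hAB : dist A B = x)
    (hBC : dist B C = x) (hDE : dist D E = x) (hEA : dist E A = x) (hpar : A - B = D - C) :
    cross2 A B + cross2 B C + cross2 C D + cross2 D E + cross2 E A ≤ 2 * x ^ 2 * (1 + √3 / 4) := by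
  have hD : D = C + (A - B) := by rw [hpar]; abel
  have hDA : D - A = C - B := by rw [hD]; abel
  -- twice the area of the parallelogram `ABCD` plus twice that of the triangle `ADE`
  have hsplit : cross2 A B + cross2 B C + cross2 C D + cross2 D E + cross2 E A
      = 2 * cross2 (B - A) (C - B) + cross2 (D - A) (E - A) := by
    subst hD; simp only [cross2, PiLp.sub_apply, PiLp.add_apply]; ring
  have hpgram : cross2 (B - A) (C - B) ≤ x * x := by
    have := cross2_le_norm_mul_norm (B - A) (C - B)
    rwa [← dist_eq_norm', ← dist_eq_norm', hAB, hBC] at this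
  have htri : cross2 (D - A) (E - A) ≤ √3 / 2 * x ^ 2 := by
    refine cross2_le_of_norm_eq ?_ ?_ ?_
    · rw [hDA, ← dist_eq_norm', hBC]
    · rw [← dist_eq_norm', dist_comm, hEA]
    · rw [sub_sub_sub_cancel_right, ← dist_eq_norm, hDE]
  rw [hsplit]
  nlinarith

lemma two_mul_shoelace_eq (v : Fin 5 → Pt) (j : Fin 5) :
    2 * shoelace v = cross2 (v j) (v (j + 1)) + cross2 (v (j + 1)) (v (j + 1 + 1))
      + cross2 (v (j + 1 + 1)) (v (j + 1 + 1 + 1))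
      + cross2 (v (j + 1 + 1 + 1)) (v (j + 1 + 1 + 1 + 1))
      + cross2 (v (j + 1 + 1 + 1 + 1)) (v j) := by
  rw [shoelace, Fin.sum_univ_five]
  fin_cases j <;>
    simp only [cross2, Fin.isValue, Fin.zero_eta, Fin.mk_one, Fin.reduceFinMk, Fin.reduceAdd,
      zero_add] <;>
    ring

namespace IsEquilateralPentagon

variable {v : Fin 5 → Pt} (hv : IsEquilateralPentagon v)
include hv

lemma perimeter_eq : perimeter v = 5 * dist (v 0) (v 1) := by
  rw [perimeter, Fin.sum_univ_five, hv 1 0, hv 2 0, hv 3 0, hv 4 0, zero_add]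
  ring

lemma shoelace_le (hconv : IsConvexPolygon v) {i : Fin 5}
    (hang : interiorAngle v i + interiorAngle v (i + 1) = Real.pi) :
    shoelace v ≤ dist (v 0) (v 1) ^ 2 * (1 + √3 / 4) := by
  set x := dist (v 0) (v 1)
  have hedge : ∀ k, dist (v k) (v (k + 1)) = x := fun k => hv k 0
  obtain ⟨j, rfl⟩ : ∃ j, i = j + 1 := ⟨i - 1, (sub_add_cancel i 1).symm⟩
  have hB := hconv.cross2_nonneg (j + 1)
  have hC := hconv.cross2_nonneg (j + 1 + 1)
  rw [interiorAngle_eq_angle hB, interiorAngle_eq_angle hC] at hang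
  simp only [add_sub_cancel_right] at hB hC hang
  have hpar := sub_eq_sub_of_angle_add_angle_eq_pi ((hedge j).trans (hedge (j + 1)).symm)
    ((hedge (j + 1 + 1)).trans (hedge (j + 1)).symm)
    (hconv.1.1.1.ne (Fin.add_one_ne_self_of_one_lt (by norm_num) (j + 1)).symm) hB hC hang
  have hcycle : j + 1 + 1 + 1 + 1 + 1 = j := by fin_cases j <;> rfl
  have := cross2_sum_le_of_sub_eq_sub (hedge j) (hedge (j + 1)) (hedge (j + 1 + 1 + 1))
    (by simpa only [hcycle] using hedge (j + 1 + 1 + 1 + 1)) hpar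
  linarith [two_mul_shoelace_eq v j]

lemma le_perimeter (hconv : IsConvexPolygon v) (harea : polyArea v = 1) {i : Fin 5}
    (hang : interiorAngle v i + interiorAngle v (i + 1) = Real.pi) :
    5 / √(1 + √3 / 4) ≤ perimeter v := by
  rw [polyArea, abs_of_pos hconv.1.2] at harea
  have hx : 1 ≤ √(dist (v 0) (v 1) ^ 2 * (1 + √3 / 4)) :=
    Real.one_le_sqrt.2 (harea ▸ hv.shoelace_le hconv hang)
  rw [Real.sqrt_mul (sq_nonneg _), Real.sqrt_sq dist_nonneg] at hx
  rw [hv.perimeter_eq, div_le_iff₀ (by positivity)]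
  linarith

end IsEquilateralPentagon

lemma cross2_sub_eq_of_mem_segment {a b z : Pt} (e o : Pt) (hz : z ∈ segment ℝ a b) :
    ∃ s t : ℝ, 0 ≤ s ∧ 0 ≤ t ∧ s + t = 1 ∧ z = s • a + t • b ∧
      cross2 e (z - o) = s * cross2 e (a - o) + t * cross2 e (b - o) := by
  obtain ⟨s, t, hs, ht, hst, rfl⟩ := hz
  refine ⟨s, t, hs, ht, hst, rfl, ?_⟩
  obtain rfl : t = 1 - s := by linarith
  simp only [cross2, PiLp.sub_apply, PiLp.add_apply, PiLp.smul_apply, smul_eq_mul]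
  ring

lemma segment_inter_segment_eq_singleton {a b c : Pt} (h : cross2 (b - a) (c - a) ≠ 0) :
    segment ℝ a b ∩ segment ℝ b c = {b} := by
  refine Set.eq_singleton_iff_unique_mem.2 ⟨⟨right_mem_segment ℝ a b, left_mem_segment ℝ b c⟩, ?_⟩
  rintro z ⟨hab, hbc⟩
  obtain ⟨s, t, -, -, -, -, hz⟩ := cross2_sub_eq_of_mem_segment (b - a) a hab
  obtain ⟨s', t', -, -, hst', rfl, hz'⟩ := cross2_sub_eq_of_mem_segment (b - a) a hbc
  rw [sub_self, cross2_zero_right, cross2_self] at hz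
  rw [cross2_self] at hz'
  obtain rfl : t' = 0 := by
    rcases mul_eq_zero.1 (by linarith : t' * cross2 (b - a) (c - a) = 0) with h' | h'
    · exact h'
    · exact absurd h' h
  simp [(by linarith : s' = 1)]

lemma segment_inter_segment_eq_empty {a b c d : Pt} (e o : Pt) (ha : cross2 e (a - o) = 0)
    (hb : cross2 e (b - o) = 0) (hc : 0 < cross2 e (c - o)) (hd : 0 < cross2 e (d - o)) :
    segment ℝ a b ∩ segment ℝ c d = ∅ := by
  refine Set.eq_empty_iff_forall_notMem.2 fun z ⟨hab, hcd⟩ => ?_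
  obtain ⟨s, t, -, -, -, -, hz⟩ := cross2_sub_eq_of_mem_segment e o hab
  obtain ⟨s', t', hs', ht', hst', -, hz'⟩ := cross2_sub_eq_of_mem_segment e o hcd
  rw [ha, hb] at hz
  have hm : 0 < min (cross2 e (c - o)) (cross2 e (d - o)) := lt_min hc hd
  nlinarith [mul_nonneg hs' (sub_nonneg.2 (min_le_left (cross2 e (c - o)) (cross2 e (d - o)))),
    mul_nonneg ht' (sub_nonneg.2 (min_le_right (cross2 e (c - o)) (cross2 e (d - o))))]

def IsStrictlyConvex {n : ℕ} [NeZero n] (v : Fin n → Pt) : Prop :=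
  ∀ i k, k ≠ i → k ≠ i + 1 → 0 < cross2 (v (i + 1) - v i) (v k - v i)

namespace IsStrictlyConvex

variable {n : ℕ} [NeZero n] {v : Fin n → Pt} (hv : IsStrictlyConvex v) (hn : 2 < n)
include hv hn

lemma cross2_pos (i : Fin n) : 0 < cross2 (v i - v (i - 1)) (v (i + 1) - v i) := by
  obtain ⟨j, rfl⟩ : ∃ j, i = j + 1 := ⟨i - 1, (sub_add_cancel i 1).symm⟩
  have := hv j (j + 1 + 1) (Fin.add_one_add_one_ne_self hn j)
    (Fin.add_one_ne_self_of_one_lt (by omega) (j + 1))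
  rw [add_sub_cancel_right]
  convert this using 1
  simp only [cross2, PiLp.sub_apply]; ring

lemma isSimplePolygon : IsSimplePolygon v := by
  have hne := Fin.add_one_ne_self_of_one_lt (by omega : 1 < n)
  have hne2 := Fin.add_one_add_one_ne_self hn
  refine ⟨fun i k hik => ?_, fun i => ?_, fun i j hji hji' hji'' => ?_⟩
  · by_contra hki
    by_cases hk : k = i + 1
    · subst hk
      have := hv (i + 1) i (hne i).symm (hne2 i).symm
      rw [hik, sub_self, cross2_zero_right] at this
      exact this.false
    · have := hv i k (Ne.symm hki) hk
      rw [← hik, sub_self, cross2_zero_right] at this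
      exact this.false
  · exact segment_inter_segment_eq_singleton (hv i (i + 1 + 1) (hne2 i) (hne (i + 1))).ne'
  · exact segment_inter_segment_eq_empty _ (v i) (by rw [sub_self, cross2_zero_right])
      (cross2_self _) (hv i j hji hji') (hv i (j + 1) hji'' fun h => hji (add_right_cancel h))

lemma isConvexPolygon (hs : 0 < shoelace v) : IsConvexPolygon v :=
  ⟨⟨hv.isSimplePolygon hn, hs⟩, fun i => by
    rw [interiorAngle_eq_angle (hv.cross2_pos hn i).le]
    exact angle_le_pi _ _ _⟩

end IsStrictlyConvex

def housePentagon (x : ℝ) : Fin 5 → Pt :=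
  ![!₂[0, 0], !₂[x, 0], !₂[x, x], !₂[x / 2, x + √3 / 2 * x], !₂[0, x]]

section housePentagon

variable {x : ℝ} (hx : 0 < x)
include hx

lemma housePentagon_isStrictlyConvex : IsStrictlyConvex (housePentagon x) := by
  have h3 : 0 < √3 := by positivity
  intro i k hki hk
  fin_cases i <;> fin_cases k <;> (try exact absurd rfl hki) <;> (try exact absurd rfl hk) <;>
    simp only [housePentagon, cross2, PiLp.sub_apply, Fin.isValue, Fin.zero_eta, Fin.mk_one,
      Fin.reduceFinMk, Fin.reduceAdd, zero_add, Matrix.cons_val_zero, Matrix.cons_val_one,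
      Matrix.cons_val, Matrix.cons_val_fin_one] <;>
    nlinarith [mul_pos h3 hx, mul_pos (mul_pos h3 hx) hx, mul_pos hx hx]

lemma housePentagon_dist (i : Fin 5) :
    dist (housePentagon x i) (housePentagon x (i + 1)) = x := by
  have h3 : √3 ^ 2 = 3 := Real.sq_sqrt (by norm_num)
  rw [EuclideanSpace.dist_eq, Real.sqrt_eq_iff_mul_self_eq_of_pos hx, Fin.sum_univ_two]
  fin_cases i <;>
    simp only [housePentagon, Real.dist_eq, sq_abs, Fin.isValue, Fin.zero_eta, Fin.mk_one,
      Fin.reduceFinMk, Fin.reduceAdd, zero_add, Matrix.cons_val_zero, Matrix.cons_val_one,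
      Matrix.cons_val, Matrix.cons_val_fin_one] <;>
    nlinarith

end housePentagon

lemma shoelace_housePentagon (x : ℝ) : shoelace (housePentagon x) = x ^ 2 * (1 + √3 / 4) := by
  rw [shoelace, Fin.sum_univ_five]
  simp only [housePentagon, Fin.isValue, Fin.reduceAdd, zero_add, Matrix.cons_val_zero,
    Matrix.cons_val_one, Matrix.cons_val, Matrix.cons_val_fin_one]
  ring

lemma angle_housePentagon {x : ℝ} {i : Fin 5} (hi : i = 0 ∨ i = 1) :
    ∠ (housePentagon x (i - 1)) (housePentagon x i) (housePentagon x (i + 1)) = Real.pi / 2 := by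
  rw [EuclideanGeometry.angle, ← InnerProductGeometry.inner_eq_zero_iff_angle_eq_pi_div_two]
  rcases hi with rfl | rfl <;> simp [housePentagon, PiLp.inner_apply, Fin.sum_univ_two]

theorem stmt18 :
    (∀ v : Fin 5 → Pt, IsConvexPolygon v → polyArea v = 1 →
      IsEquilateralPentagon v →
      (∃ i, interiorAngle v i + interiorAngle v (i + 1) = Real.pi) →
      5 / Real.sqrt (1 + Real.sqrt 3 / 4) ≤ perimeter v) ∧
    ∃ w : Fin 5 → Pt, IsConvexPolygon w ∧ polyArea w = 1 ∧
      IsEquilateralPentagon w ∧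
      (∃ i, interiorAngle w i = Real.pi / 2 ∧ interiorAngle w (i + 1) = Real.pi / 2) ∧
      perimeter w = 5 / Real.sqrt (1 + Real.sqrt 3 / 4) := by
  refine ⟨fun v hconv harea hequi ⟨i, hang⟩ => hequi.le_perimeter hconv harea hang, ?_⟩
  have hc : 0 < 1 + √3 / 4 := by positivity
  set x := 1 / √(1 + √3 / 4)
  have hx : 0 < x := by positivity
  have hconvex := housePentagon_isStrictlyConvex hx
  have harea : shoelace (housePentagon x) = 1 := by
    rw [shoelace_housePentagon, div_pow, Real.sq_sqrt hc.le]
    field_simp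
  have hequi : IsEquilateralPentagon (housePentagon x) := fun i j => by
    rw [housePentagon_dist hx, housePentagon_dist hx]
  have hright : ∀ i : Fin 5, i = 0 ∨ i = 1 → interiorAngle (housePentagon x) i = Real.pi / 2 :=
    fun i hi => by
      rw [interiorAngle_eq_angle (hconvex.cross2_pos (by norm_num) i).le]
      exact angle_housePentagon hi
  refine ⟨housePentagon x, hconvex.isConvexPolygon (by norm_num) (harea ▸ one_pos),
    by rw [polyArea, harea, abs_one], hequi, ⟨0, hright 0 (.inl rfl), hright 1 (.inr rfl)⟩, ?_⟩
  rw [hequi.perimeter_eq, show dist (housePentagon x 0) (housePentagon x 1) = x from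
    housePentagon_dist hx 0]
  ring

end
end
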